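/- The sequence e_N = tr(E_N) (trace of the top-left block of Q_N^{(g)}) satisfies the linear recurrence e_{N+1} = (a00^00 + a11^11) e_N + (a01^01 a10^10 − a00^00 a11^11) e_{N-1} for N ≥ 2, with e_1 = 1 and e_2 = a00^00 + a01^01. -/

import Mathlib

/-!
Since `a_{kl}^{ij}` vanishes unless `j = l`, the entry of `Q_{N+1}^{(g)}` at `(k l x, i j y)` is
`Q_N^{(g)}(l x, j y) · a_{kj}^{ij}`. Summing over the diagonal, the traces `(e_N, d_N)` of the
two diagonal blocks of `Q_N^{(g)}` evolve linearly under the transfer matrix `T = (a_{kj}^{kj})`,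
starting from `(1, 1)`. So `e_N` is the first coordinate of `T^{N-1} (1, 1)`, and Cayley–Hamilton,
`T² = tr T · T − det T`, gives the recurrence.
-/

open Matrix Kronecker

/-- Configuration space of `N` sites, each holding a state in `{0,1}`. -/
abbrev Conf (N : ℕ) := Fin N → Fin 2

/-- `Fin 2 × Conf N ≃ Conf (N+1)` by prepending the first bit. -/
def confEquiv (N : ℕ) : Fin 2 × Conf N ≃ Conf (N + 1) :=
  Fin.consEquiv (fun _ => Fin 2)

/-- `(Fin 2 × Fin 2) × Conf N ≃ Conf (N+2)` by prepending the first two bits. -/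
def confEquiv2 (N : ℕ) : (Fin 2 × Fin 2) × Conf N ≃ Conf (N + 2) :=
  (((Equiv.prodAssoc (Fin 2) (Fin 2) (Conf N)).trans
    ((Equiv.refl (Fin 2)).prodCongr (confEquiv N))).trans (confEquiv (N + 1)))

/-- The global operator `Q_N^{(g)}`, defined by `Q_1 = I_2` and
`Q_{N+1} = (I_2 ⊗ Q_N) (Q^{(l)} ⊗ I_{2^{N-1}})`. -/
def Qg {R : Type*} [CommRing R] (Ql : Matrix (Fin 2 × Fin 2) (Fin 2 × Fin 2) R) :
    (N : ℕ) → Matrix (Conf N) (Conf N) R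
  | 0 => 1
  | 1 => 1
  | (N + 2) =>
      (Matrix.reindex (confEquiv (N + 1)) (confEquiv (N + 1))
          ((1 : Matrix (Fin 2) (Fin 2) R) ⊗ₖ Qg Ql (N + 1))) *
      (Matrix.reindex (confEquiv2 N) (confEquiv2 N)
          (Ql ⊗ₖ (1 : Matrix (Conf N) (Conf N) R)))

/-- Top-left block `E`. -/
def blockTL {R : Type*} [CommRing R] {N : ℕ}
    (M : Matrix (Conf (N + 1)) (Conf (N + 1)) R) : Matrix (Conf N) (Conf N) R :=
  Matrix.of fun x y => M (Fin.cons 0 x) (Fin.cons 0 y)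

/-- Top-right block `F`. -/
def blockTR {R : Type*} [CommRing R] {N : ℕ}
    (M : Matrix (Conf (N + 1)) (Conf (N + 1)) R) : Matrix (Conf N) (Conf N) R :=
  Matrix.of fun x y => M (Fin.cons 0 x) (Fin.cons 1 y)

/-- Bottom-left block `G`. -/
def blockBL {R : Type*} [CommRing R] {N : ℕ}
    (M : Matrix (Conf (N + 1)) (Conf (N + 1)) R) : Matrix (Conf N) (Conf N) R :=
  Matrix.of fun x y => M (Fin.cons 1 x) (Fin.cons 0 y)

/-- Bottom-right block `H`. -/
def blockBR {R : Type*} [CommRing R] {N : ℕ}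
    (M : Matrix (Conf (N + 1)) (Conf (N + 1)) R) : Matrix (Conf N) (Conf N) R :=
  Matrix.of fun x y => M (Fin.cons 1 x) (Fin.cons 1 y)


/-- The sequence `e_N = tr E_N`, with the convention `e_0 = 1`. -/
noncomputable def trE (Ql : Matrix (Fin 2 × Fin 2) (Fin 2 × Fin 2) ℂ) : ℕ → ℂ
  | 0 => 1
  | (N + 1) => Matrix.trace (blockTL (Qg Ql (N + 1)))

namespace Matrix

variable {R : Type*} [CommRing R]

theorem sq_eq_trace_smul_sub_det_smul (A : Matrix (Fin 2) (Fin 2) R) :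
    A ^ 2 = A.trace • A - A.det • (1 : Matrix (Fin 2) (Fin 2) R) := by
  ext i j
  fin_cases i <;> fin_cases j <;>
    simp [sq, mul_apply, Fin.sum_univ_two, trace_fin_two, det_fin_two] <;> ring

theorem pow_add_two_mulVec (A : Matrix (Fin 2) (Fin 2) R) (v : Fin 2 → R) (n : ℕ) :
    A ^ (n + 2) *ᵥ v = A.trace • (A ^ (n + 1) *ᵥ v) - A.det • (A ^ n *ᵥ v) := by
  have h : A ^ (n + 2) = A.trace • A ^ (n + 1) - A.det • A ^ n := by
    rw [pow_add, sq_eq_trace_smul_sub_det_smul, mul_sub, mul_smul_comm, mul_smul_comm, mul_one,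
      pow_succ]
  rw [h, sub_mulVec, smul_mulVec, smul_mulVec]

end Matrix

section TransferMatrix

variable {R : Type*} [CommRing R]

@[simp]
theorem confEquiv_apply (N : ℕ) (m : Fin 2) (z : Conf N) : confEquiv N (m, z) = Fin.cons m z :=
  rfl

@[simp]
theorem confEquiv2_apply (N : ℕ) (m n : Fin 2) (z : Conf N) :
    confEquiv2 N ((m, n), z) = Fin.cons m (Fin.cons n z) :=
  rfl

@[simp]
theorem confEquiv_symm_cons (N : ℕ) (m : Fin 2) (z : Conf N) :
    (confEquiv N).symm (Fin.cons m z) = (m, z) :=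
  (confEquiv N).symm_apply_apply (m, z)

@[simp]
theorem confEquiv2_symm_cons_cons (N : ℕ) (m n : Fin 2) (z : Conf N) :
    (confEquiv2 N).symm (Fin.cons m (Fin.cons n z)) = ((m, n), z) :=
  (confEquiv2 N).symm_apply_apply ((m, n), z)

theorem Qg_succ_succ_cons_cons (Ql : Matrix (Fin 2 × Fin 2) (Fin 2 × Fin 2) R) (N : ℕ)
    (k l i j : Fin 2) (x y : Conf N) :
    Qg Ql (N + 2) (Fin.cons k (Fin.cons l x)) (Fin.cons i (Fin.cons j y)) =
      ∑ n, Qg Ql (N + 1) (Fin.cons l x) (Fin.cons n y) * Ql (k, n) (i, j) := by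
  rw [Qg, mul_apply, ← Equiv.sum_comp (confEquiv2 N)]
  simp [Fintype.sum_prod_type, one_apply]

theorem Qg_succ_succ_cons_cons_of_vanishing {Ql : Matrix (Fin 2 × Fin 2) (Fin 2 × Fin 2) R}
    (hvan : ∀ i j k l : Fin 2, j ≠ l → Ql (k, l) (i, j) = 0) (N : ℕ)
    (k l i j : Fin 2) (x y : Conf N) :
    Qg Ql (N + 2) (Fin.cons k (Fin.cons l x)) (Fin.cons i (Fin.cons j y)) =
      Qg Ql (N + 1) (Fin.cons l x) (Fin.cons j y) * Ql (k, j) (i, j) := by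
  rw [Qg_succ_succ_cons_cons, Fintype.sum_eq_single j]
  intro n hn
  rw [hvan i j k n (Ne.symm hn), mul_zero]

def blockTraces {N : ℕ} (M : Matrix (Conf (N + 1)) (Conf (N + 1)) R) : Fin 2 → R :=
  fun k => ∑ x, M (Fin.cons k x) (Fin.cons k x)

def transferMatrix (Ql : Matrix (Fin 2 × Fin 2) (Fin 2 × Fin 2) R) : Matrix (Fin 2) (Fin 2) R :=
  of fun k j => Ql (k, j) (k, j)

theorem blockTraces_Qg_one (Ql : Matrix (Fin 2 × Fin 2) (Fin 2 × Fin 2) R) :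
    blockTraces (Qg Ql 1) = fun _ => 1 := by
  ext k
  simp [blockTraces, Qg]

theorem blockTraces_Qg_succ_succ {Ql : Matrix (Fin 2 × Fin 2) (Fin 2 × Fin 2) R}
    (hvan : ∀ i j k l : Fin 2, j ≠ l → Ql (k, l) (i, j) = 0) (N : ℕ) :
    blockTraces (Qg Ql (N + 2)) = transferMatrix Ql *ᵥ blockTraces (Qg Ql (N + 1)) := by
  ext k
  simp only [blockTraces, mulVec, dotProduct, transferMatrix, of_apply]
  rw [← Equiv.sum_comp (confEquiv N), Fintype.sum_prod_type]
  simp [Qg_succ_succ_cons_cons_of_vanishing hvan, Finset.mul_sum, mul_comm]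

theorem blockTraces_Qg {Ql : Matrix (Fin 2 × Fin 2) (Fin 2 × Fin 2) R}
    (hvan : ∀ i j k l : Fin 2, j ≠ l → Ql (k, l) (i, j) = 0) (N : ℕ) :
    blockTraces (Qg Ql (N + 1)) = transferMatrix Ql ^ N *ᵥ fun _ => 1 := by
  induction N with
  | zero => rw [pow_zero, one_mulVec, blockTraces_Qg_one]
  | succ N ih => rw [blockTraces_Qg_succ_succ hvan, ih, mulVec_mulVec, ← pow_succ']

end TransferMatrix

theorem trE_succ (Ql : Matrix (Fin 2 × Fin 2) (Fin 2 × Fin 2) ℂ) (N : ℕ) :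
    trE Ql (N + 1) = blockTraces (Qg Ql (N + 1)) 0 :=
  rfl

/-- `e_{N+1} = (a₀₀⁰⁰ + a₁₁¹¹) e_N + (a₀₁⁰¹ a₁₀¹⁰ − a₀₀⁰⁰ a₁₁¹¹) e_{N-1}`
for `N ≥ 2`, with `e_1 = 1` and `e_2 = a₀₀⁰⁰ + a₀₁⁰¹`. -/
theorem stmt6 (Ql : Matrix (Fin 2 × Fin 2) (Fin 2 × Fin 2) ℂ) (hvan : ∀ i j k l : Fin 2, j ≠ l → Ql (k, l) (i, j) = 0) :
    trE Ql 1 = 1 ∧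
    trE Ql 2 = Ql (0, 0) (0, 0) + Ql (0, 1) (0, 1) ∧
    ∀ N : ℕ, trE Ql (N + 3) =
      (Ql (0, 0) (0, 0) + Ql (1, 1) (1, 1)) * trE Ql (N + 2) +
      (Ql (0, 1) (0, 1) * Ql (1, 0) (1, 0) - Ql (0, 0) (0, 0) * Ql (1, 1) (1, 1))
        * trE Ql (N + 1) := by
  have he (N : ℕ) : trE Ql (N + 1) = (transferMatrix Ql ^ N *ᵥ fun _ => 1) 0 := by
    rw [trE_succ, blockTraces_Qg hvan]
  refine ⟨by simp [he 0], ?_, fun N => ?_⟩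
  · simp [he 1, transferMatrix, mulVec, dotProduct, Fin.sum_univ_two]
  · rw [he, he, he, pow_add_two_mulVec]
    simp only [Pi.sub_apply, Pi.smul_apply, smul_eq_mul, trace_fin_two, det_fin_two,
      transferMatrix, of_apply]
    ring
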